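/- arXiv:1409.1642 — 2 statements merged into one kernel-verified Lean document; each statement's English description precedes it below -/
import Mathlib

section
/- Let n ≥ 2 and let a_1, …, a_n be positive real numbers. Then there exist unique positive real numbers b_1, …, b_n such that for every i, a_i = (n-1)! · ∏_{j ≠ i} b_j. -/
/-!
Writing `Q = ∏ⱼ bⱼ`, the system `aᵢ = c ∏_{j ≠ i} bⱼ` says exactly `aᵢ bᵢ = c Q` for every `i`.
Multiplying these `n` equations gives `(∏ᵢ aᵢ) Q = cⁿ Qⁿ`, i.e. `cⁿ Q^(n-1) = ∏ᵢ aᵢ`; for `n ≥ 2`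
this pins down `Q > 0` as an `(n-1)`-st root, and then `bᵢ = c Q / aᵢ`. Conversely these `bᵢ`
have product `cⁿ Qⁿ / ∏ᵢ aᵢ = Q`, so they solve the system.
-/

open Finset

section
variable {ι : Type*} [Fintype ι]

theorem eq_mul_prod_erase_iff {M : Type*} [CommMonoidWithZero M] [IsRightCancelMulZero M]
    [DecidableEq ι] {b : ι → M} {i : ι} (hb : b i ≠ 0) (x c : M) :
    x = c * ∏ j ∈ univ.erase i, b j ↔ x * b i = c * ∏ j, b j := by
  rw [← prod_erase_mul _ _ (mem_univ i), ← mul_assoc, mul_left_inj' hb]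

variable {K : Type*} [Field K] [Nonempty ι]

theorem pow_mul_prod_pow_pred_eq_prod_of_mul_eq {a b : ι → K} {c : K} (hb : ∏ j, b j ≠ 0)
    (h : ∀ i, a i * b i = c * ∏ j, b j) :
    c ^ Fintype.card ι * (∏ j, b j) ^ (Fintype.card ι - 1) = ∏ i, a i := by
  have hprod : (∏ i, a i) * ∏ j, b j = (c * ∏ j, b j) ^ Fintype.card ι := by
    rw [← prod_mul_distrib, prod_congr rfl fun i _ => h i, prod_const, card_univ]
  rw [← mul_left_inj' hb, hprod, mul_pow, mul_assoc, pow_sub_one_mul Fintype.card_ne_zero]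

theorem prod_mul_div_eq_of_pow_mul_pow_pred_eq {a : ι → K} {c Q : K} (ha : ∏ i, a i ≠ 0)
    (hQ : c ^ Fintype.card ι * Q ^ (Fintype.card ι - 1) = ∏ i, a i) :
    ∏ i, c * Q / a i = Q := by
  rw [prod_div_distrib, prod_const, card_univ, div_eq_iff ha, ← hQ, mul_pow,
    ← pow_sub_one_mul Fintype.card_ne_zero Q]
  ring

end

theorem existsUnique_pos_eq_mul_prod_erase {ι : Type*} [Fintype ι] [DecidableEq ι]
    (hι : 2 ≤ Fintype.card ι) {c : ℝ} (hc : 0 < c) {a : ι → ℝ} (ha : ∀ i, 0 < a i) :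
    ∃! b : ι → ℝ, (∀ i, 0 < b i) ∧ ∀ i, a i = c * ∏ j ∈ univ.erase i, b j := by
  have : Nonempty ι := Fintype.card_pos_iff.1 (by omega)
  have hm : Fintype.card ι - 1 ≠ 0 := by omega
  have hA : 0 < ∏ i, a i := prod_pos fun i _ => ha i
  set Q : ℝ := ((∏ i, a i) / c ^ Fintype.card ι) ^ ((Fintype.card ι - 1 : ℕ) : ℝ)⁻¹
  have hQ : 0 < Q := by positivity
  have hQA : c ^ Fintype.card ι * Q ^ (Fintype.card ι - 1) = ∏ i, a i := by
    rw [Real.rpow_inv_natCast_pow (by positivity) hm]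
    field_simp
  have hsol_pos : ∀ i, 0 < c * Q / a i := fun i => div_pos (mul_pos hc hQ) (ha i)
  refine ⟨fun i => c * Q / a i, ⟨hsol_pos, fun i => ?_⟩, ?_⟩
  · rw [eq_mul_prod_erase_iff (b := fun j => c * Q / a j) (hsol_pos i).ne',
      prod_mul_div_eq_of_pow_mul_pow_pred_eq hA.ne' hQA]
    field_simp [(ha i).ne']
  · rintro b ⟨hb, hsol⟩
    have hbQ : ∀ i, a i * b i = c * ∏ j, b j := fun i =>
      (eq_mul_prod_erase_iff (hb i).ne' _ _).1 (hsol i)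
    have hprod : ∏ j, b j = Q := by
      have hB : 0 < ∏ j, b j := prod_pos fun j _ => hb j
      refine (pow_left_inj₀ hB.le hQ.le hm).1
        (mul_left_cancel₀ (pow_ne_zero (Fintype.card ι) hc.ne') ?_)
      rw [pow_mul_prod_pow_pred_eq_prod_of_mul_eq hB.ne' hbQ, hQA]
    funext i
    rw [eq_div_iff (ha i).ne', mul_comm, hbQ, hprod]

/-- For `n ≥ 2` and positive reals `a_1, …, a_n`, there exist unique
positive reals `b_1, …, b_n` with `a_i = (n-1)! · ∏_{j ≠ i} b_j` for every `i`. -/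
theorem stmt_0 (n : ℕ) (hn : 2 ≤ n) (a : Fin n → ℝ) (ha : ∀ i, 0 < a i) :
    ∃! b : Fin n → ℝ, (∀ i, 0 < b i) ∧
      ∀ i, a i = (Nat.factorial (n - 1) : ℝ) * ∏ j ∈ Finset.univ.erase i, b j :=
  existsUnique_pos_eq_mul_prod_erase (by rwa [Fintype.card_fin]) (by positivity) ha
end

section
/- Let V, I, J, K, g, ω_I, ω_J, ω_K be as in a quaternion-Hermitian vector space. Let A = a₁I + a₂J + a₃K with a₁²+a₂²+a₃² = 1, and let W = v₁I + v₂J + v₃K with a₁v₁+a₂v₂+a₃v₃ = 0 (so W is tangent to the sphere of complex structures at A). Then for every X ∈ V and every Y ∈ V with AY = −iY in V⊗ℂ (i.e., Y of type (0,1) for A), one has (ω_W + i ω_{AW})(X, Y) = 0, where ω_B(X,Y) = g(BX,Y) extended ℂ-bilinearly and AW denotes the quaternion product. -/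
/-- let `A = a₁I + a₂J + a₃K` with `a₁²+a₂²+a₃² = 1` and
`W = v₁I + v₂J + v₃K` with `a₁v₁+a₂v₂+a₃v₃ = 0`.  For `X ∈ V` and a `(0,1)`-vector
`Y = Y₁ + iY₂ ∈ V⊗ℂ` for `A` (i.e. `AY = −iY`, encoded as `AY₁ = Y₂`, `AY₂ = −Y₁`), one has
`(ω_W + i ω_{AW})(X,Y) = 0`, where `ω_B(X,Y) = g(BX,Y)` extended `ℂ`-bilinearly and the
quaternion product `AW` acts as the composition `A ∘ W`. -/
theorem stmt_10 (V : Type*) [AddCommGroup V] [Module ℝ V]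
    (Iv Jv Kv : V →ₗ[ℝ] V)
    (hI2 : ∀ v, Iv (Iv v) = -v) (hJ2 : ∀ v, Jv (Jv v) = -v) (hK2 : ∀ v, Kv (Kv v) = -v)
    (hIJ : ∀ v, Iv (Jv v) = Kv v) (hJI : ∀ v, Jv (Iv v) = -Kv v)
    (g : V →ₗ[ℝ] V →ₗ[ℝ] ℝ)
    (hsymm : ∀ X Y, g X Y = g Y X) (hposdef : ∀ X, X ≠ 0 → 0 < g X X)
    (hgI : ∀ X Y, g (Iv X) (Iv Y) = g X Y)
    (hgJ : ∀ X Y, g (Jv X) (Jv Y) = g X Y)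
    (hgK : ∀ X Y, g (Kv X) (Kv Y) = g X Y)
    (a₁ a₂ a₃ v₁ v₂ v₃ : ℝ)
    (ha : a₁ ^ 2 + a₂ ^ 2 + a₃ ^ 2 = 1)
    (hav : a₁ * v₁ + a₂ * v₂ + a₃ * v₃ = 0)
    (A W : V →ₗ[ℝ] V)
    (hA : A = a₁ • Iv + a₂ • Jv + a₃ • Kv)
    (hW : W = v₁ • Iv + v₂ • Jv + v₃ • Kv)
    (X Y₁ Y₂ : V) (hY1 : A Y₁ = Y₂) (hY2 : A Y₂ = -Y₁) :
    ((g (W X) Y₁ - g ((A ∘ₗ W) X) Y₂ : ℝ) : ℂ) +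
      Complex.I * ((g (W X) Y₂ + g ((A ∘ₗ W) X) Y₁ : ℝ) : ℂ) = 0 := by

  -- derived quaternion relations
  have hIK : ∀ v, Iv (Kv v) = -Jv v := fun v => by
    rw [← hIJ, hI2]
  have hKI : ∀ v, Kv (Iv v) = Jv v := fun v => by
    rw [← hIJ (Iv v), hJI, map_neg, hIK, neg_neg]
  have hKJ : ∀ v, Kv (Jv v) = -Iv v := fun v => by
    rw [← hIJ (Jv v), hJ2, map_neg]
  have hJK : ∀ v, Jv (Kv v) = Iv v := fun v => by
    rw [← hIJ v, hJI, hKJ, neg_neg]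
  -- skew-adjointness
  have skI : ∀ u w, g (Iv u) w = - g u (Iv w) := fun u w => by
    have h := hgI u (Iv w); rw [hI2, map_neg] at h; linarith
  have skJ : ∀ u w, g (Jv u) w = - g u (Jv w) := fun u w => by
    have h := hgJ u (Jv w); rw [hJ2, map_neg] at h; linarith
  have skK : ∀ u w, g (Kv u) w = - g u (Kv w) := fun u w => by
    have h := hgK u (Kv w); rw [hK2, map_neg] at h; linarith
  -- A is g-invariant
  have hgA : ∀ u w, g (A u) (A w) = g u w := fun u w => by
    simp only [hA, LinearMap.add_apply, LinearMap.smul_apply, map_add, map_smul,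
      LinearMap.add_apply, LinearMap.smul_apply, smul_eq_mul]
    have c1 : g (Iv u) (Jv w) = - g u (Kv w) := by rw [skI, hIJ]
    have c2 : g (Jv u) (Iv w) = g u (Kv w) := by rw [skJ, hJI, map_neg, neg_neg]
    have c3 : g (Iv u) (Kv w) = g u (Jv w) := by rw [skI, hIK, map_neg, neg_neg]
    have c4 : g (Kv u) (Iv w) = - g u (Jv w) := by rw [skK, hKI]
    have c5 : g (Jv u) (Kv w) = - g u (Iv w) := by rw [skJ, hJK]
    have c6 : g (Kv u) (Jv w) = g u (Iv w) := by rw [skK, hKJ, map_neg, neg_neg]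
    rw [c1, c2, c3, c4, c5, c6, hgI, hgJ, hgK]
    linear_combination (g u) w * ha
  -- A squares to -1
  have hA2 : ∀ v, A (A v) = -v := fun v => by
    have h : A (A v) = (a₁ ^ 2 + a₂ ^ 2 + a₃ ^ 2) • (-v) := by
      simp only [hA, LinearMap.add_apply, LinearMap.smul_apply, map_add, map_smul,
        hI2, hJ2, hK2, hIJ, hJI, hIK, hKI, hJK, hKJ]
      module
    rw [h, ha, one_smul]
  -- skew-adjointness of A
  have skA : ∀ u w, g (A u) w = - g u (A w) := fun u w => by
    have h := hgA u (A w); rw [hA2, map_neg] at h; linarith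
  have h1 : g (W X) Y₁ - g ((A ∘ₗ W) X) Y₂ = 0 := by
    have := hgA (W X) Y₁
    rw [hY1] at this
    simp only [LinearMap.comp_apply]
    linarith
  have h2 : g (W X) Y₂ + g ((A ∘ₗ W) X) Y₁ = 0 := by
    have := skA (W X) Y₁
    rw [hY1] at this
    simp only [LinearMap.comp_apply]
    linarith
  rw [h1, h2]
  simp
end
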